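/- Let n/2 < k ≤ n, θ = (n−k)/k. Let w̃ : (0, r₀] → ℝ be C² and satisfy (2.20)–(2.21): w̃'/r − (w̃')²/2 ≥ 0 and (w̃'' + w̃'/r) − (1−θ)(w̃'/r − (w̃')²/2) ≥ 0 on (0, r₀], and suppose w̃(r) → −∞ as r → 0⁺. Then w̃(r) = 2 log r + C on (0, r₀] for some constant C. -/

import Mathlib

/-!
With `g r = r * w' r`, inequality (2.20) says `0 ≤ g ≤ 2`, and (2.21) says
`g' ≥ (1 - θ) * w' * (2 - g) / 2 ≥ 0`, so `g` is nondecreasing. If `g (r₁) = c < 2` somewhere,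
then on `(0, r₁]` we get `g' ≥ β * w'` with `β = (1 - θ) * (2 - c) / 2 > 0`, so `g - β * w` is
nondecreasing; as `g ≥ 0` this bounds `w` from below near `0`, contradicting the blow-up.
Hence `g ≡ 2`, i.e. `w' = 2 / r`.
-/

open Set Filter Topology

theorem Convex.monotoneOn_of_hasDerivAt_nonneg {s : Set ℝ} (hs : Convex ℝ s) {f f' : ℝ → ℝ}
    (hf : ∀ x ∈ s, HasDerivAt f (f' x) x) (hf' : ∀ x ∈ s, 0 ≤ f' x) : MonotoneOn f s :=
  monotoneOn_of_hasDerivWithinAt_nonneg hs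
    (fun x hx => (hf x hx).continuousAt.continuousWithinAt)
    (fun x hx => (hf x (interior_subset hx)).hasDerivWithinAt)
    (fun x hx => hf' x (interior_subset hx))

theorem Convex.exists_forall_eq_of_hasDerivAt_zero {s : Set ℝ} (hs : Convex ℝ s) {f : ℝ → ℝ}
    (hf : ∀ x ∈ s, HasDerivAt f 0 x) : ∃ C, ∀ x ∈ s, f x = C := by
  rcases s.eq_empty_or_nonempty with rfl | ⟨x₀, hx₀⟩
  · exact ⟨0, fun x hx => hx.elim⟩
  refine ⟨f x₀, fun x hx => ?_⟩
  have := hs.norm_image_sub_le_of_norm_hasDerivWithin_le (C := 0)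
    (fun y hy => (hf y hy).hasDerivWithinAt) (fun _ _ => by simp) hx₀ hx
  simpa [sub_eq_zero] using this

theorem nonneg_and_mul_le_two_of_div_sub_sq_nonneg {r x : ℝ} (hr : 0 < r)
    (h : 0 ≤ x / r - x ^ 2 / 2) : 0 ≤ x ∧ r * x ≤ 2 := by
  have hprod : 0 ≤ x * (2 - r * x) := by
    have e : x * (2 - r * x) = 2 * r * (x / r - x ^ 2 / 2) := by field_simp
    rw [e]; positivity
  constructor <;> nlinarith [sq_nonneg x]

theorem mul_mul_sub_le_of_radial_ineq {a r x y : ℝ} (hr : 0 < r)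
    (h : 0 ≤ (y + x / r) - a * (x / r - x ^ 2 / 2)) : a * x * (2 - r * x) / 2 ≤ x + r * y := by
  have e : r * ((y + x / r) - a * (x / r - x ^ 2 / 2)) = x + r * y - a * x * (2 - r * x) / 2 := by
    field_simp; ring
  linarith [e ▸ mul_nonneg hr.le h]

theorem not_tendsto_nhdsGT_zero_atBot_of_bddBelow {f : ℝ → ℝ} {b : ℝ} (hb : 0 < b)
    (hf : BddBelow (f '' Ioc 0 b)) : ¬ Tendsto f (𝓝[>] 0) atBot := by
  intro hbot
  obtain ⟨m, hm⟩ := hf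
  obtain ⟨r, hlt, hr⟩ := ((hbot.eventually (eventually_lt_atBot m)).and (Ioc_mem_nhdsGT hb)).exists
  exact (hm (mem_image_of_mem f hr)).not_gt hlt

section Radial

variable {w w' w'' : ℝ → ℝ} {a b : ℝ}

theorem bddBelow_of_mul_deriv_lt_two (ha : 0 < a)
    (hD1 : ∀ r ∈ Ioc 0 b, HasDerivAt w (w' r) r)
    (hg : ∀ r ∈ Ioc 0 b, HasDerivAt (fun s => s * w' s) (w' r + r * w'' r) r)
    (hw' : ∀ r ∈ Ioc 0 b, 0 ≤ w' r)
    (hgb : ∀ r ∈ Ioc 0 b, r * w' r ≤ b * w' b) (hb : b * w' b < 2)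
    (h2 : ∀ r ∈ Ioc 0 b, a * w' r * (2 - r * w' r) / 2 ≤ w' r + r * w'' r) :
    BddBelow (w '' Ioc 0 b) := by
  set β := a * (2 - b * w' b) / 2
  have hβ : 0 < β := by have := sub_pos.2 hb; positivity
  have hmono : MonotoneOn (fun s => s * w' s - β * w s) (Ioc 0 b) := by
    refine (convex_Ioc 0 b).monotoneOn_of_hasDerivAt_nonneg
      (fun r hr => (hg r hr).sub ((hD1 r hr).const_mul β)) fun r hr => ?_
    have : β * w' r ≤ a * w' r * (2 - r * w' r) / 2 := by
      have hw'r := hw' r hr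
      calc β * w' r = a * w' r * (2 - b * w' b) / 2 := by ring
        _ ≤ a * w' r * (2 - r * w' r) / 2 := by gcongr a * w' r * (2 - ?_) / 2; exact hgb r hr
    linarith [h2 r hr]
  refine ⟨w b - b * w' b / β, ?_⟩
  rintro _ ⟨r, hr, rfl⟩
  have hle := hmono hr (right_mem_Ioc.2 (hr.1.trans_le hr.2)) hr.2
  have hg0 : 0 ≤ r * w' r := mul_nonneg hr.1.le (hw' r hr)
  dsimp only at hle
  calc w b - b * w' b / β = (β * w b - b * w' b) / β := by field_simp
    _ ≤ β * w r / β := by gcongr; linarith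
    _ = w r := by field_simp

theorem eq_two_mul_log_add_const_of_radial_ineq (ha : 0 < a)
    (hD1 : ∀ r ∈ Ioc 0 b, HasDerivAt w (w' r) r)
    (hD2 : ∀ r ∈ Ioc 0 b, HasDerivAt w' (w'' r) r)
    (h1 : ∀ r ∈ Ioc 0 b, 0 ≤ w' r / r - w' r ^ 2 / 2)
    (h2 : ∀ r ∈ Ioc 0 b, 0 ≤ (w'' r + w' r / r) - a * (w' r / r - w' r ^ 2 / 2))
    (hblow : Tendsto w (𝓝[>] 0) atBot) :
    ∃ C, ∀ r ∈ Ioc 0 b, w r = 2 * Real.log r + C := by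
  have hg (r) (hr : r ∈ Ioc 0 b) : HasDerivAt (fun s => s * w' s) (w' r + r * w'' r) r :=
    ((hasDerivAt_id' r).mul (hD2 r hr)).congr_deriv (by rw [one_mul])
  have hbd (r) (hr : r ∈ Ioc 0 b) := nonneg_and_mul_le_two_of_div_sub_sq_nonneg hr.1 (h1 r hr)
  have h2' (r) (hr : r ∈ Ioc 0 b) := mul_mul_sub_le_of_radial_ineq hr.1 (h2 r hr)
  have hgmono : MonotoneOn (fun s => s * w' s) (Ioc 0 b) :=
    (convex_Ioc 0 b).monotoneOn_of_hasDerivAt_nonneg hg fun r hr => by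
      have := mul_nonneg (mul_nonneg ha.le (hbd r hr).1) (sub_nonneg.2 (hbd r hr).2)
      linarith [h2' r hr]
  have hg2 : ∀ r ∈ Ioc 0 b, r * w' r = 2 := by
    by_contra! ⟨b₁, hb₁, hne⟩
    have hsub : Ioc 0 b₁ ⊆ Ioc 0 b := Ioc_subset_Ioc_right hb₁.2
    refine not_tendsto_nhdsGT_zero_atBot_of_bddBelow hb₁.1 ?_ hblow
    exact bddBelow_of_mul_deriv_lt_two ha (fun r hr => hD1 r (hsub hr)) (fun r hr => hg r (hsub hr))
      (fun r hr => (hbd r (hsub hr)).1) (fun r hr => hgmono (hsub hr) hb₁ hr.2)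
      (lt_of_le_of_ne (hbd b₁ hb₁).2 hne) (fun r hr => h2' r (hsub hr))
  obtain ⟨C, hC⟩ := (convex_Ioc 0 b).exists_forall_eq_of_hasDerivAt_zero
    (f := fun r => w r - 2 * Real.log r) fun r hr => by
      have hw' : w' r = 2 * r⁻¹ := by
        rw [← hg2 r hr, mul_comm r, mul_inv_cancel_right₀ hr.1.ne']
      exact ((hD1 r hr).sub ((Real.hasDerivAt_log hr.1.ne').const_mul 2)).congr_deriv
        (by rw [hw', sub_self])
  exact ⟨C, fun r hr => by linarith [hC r hr]⟩

end Radial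

theorem stmt11_general (n k : ℕ) (hk1 : (n : ℝ) / 2 < k)
    (θ : ℝ) (hθ : θ = ((n : ℝ) - k) / k)
    (r₀ : ℝ) (w w' w'' : ℝ → ℝ)
    (hD1 : ∀ r ∈ Set.Ioc (0:ℝ) r₀, HasDerivAt w (w' r) r)
    (hD2 : ∀ r ∈ Set.Ioc (0:ℝ) r₀, HasDerivAt w' (w'' r) r)
    (h1 : ∀ r ∈ Set.Ioc (0:ℝ) r₀, 0 ≤ w' r / r - (w' r) ^ 2 / 2)
    (h2 : ∀ r ∈ Set.Ioc (0:ℝ) r₀,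
      0 ≤ (w'' r + w' r / r) - (1 - θ) * (w' r / r - (w' r) ^ 2 / 2))
    (hblow : Tendsto w (nhdsWithin 0 (Set.Ioi 0)) atBot) :
    ∃ C : ℝ, ∀ r ∈ Set.Ioc (0:ℝ) r₀, w r = 2 * Real.log r + C := by
  have hk : (0 : ℝ) < k := lt_of_le_of_lt (by positivity) hk1
  have hθ1 : 0 < 1 - θ := by
    rw [hθ, sub_pos, div_lt_one hk]
    linarith
  exact eq_two_mul_log_add_const_of_radial_ineq hθ1 hD1 hD2 h1 h2 hblow

/-- For `n/2 < k ≤ n`, `θ = (n-k)/k`: if `w̃` satisfies the radial admissibility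
inequalities (2.20)–(2.21) on `(0, r₀]` and `w̃(r) → -∞` as `r → 0⁺`, then
`w̃(r) = 2 log r + C`. -/
theorem stmt11 (n k : ℕ) (hn : 3 ≤ n) (hk1 : (n : ℝ) / 2 < k) (hk2 : k ≤ n)
    (θ : ℝ) (hθ : θ = ((n : ℝ) - k) / k)
    (r₀ : ℝ) (hr₀ : 0 < r₀) (w w' w'' : ℝ → ℝ)
    (hD1 : ∀ r ∈ Set.Ioc (0:ℝ) r₀, HasDerivAt w (w' r) r)
    (hD2 : ∀ r ∈ Set.Ioc (0:ℝ) r₀, HasDerivAt w' (w'' r) r)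
    (h1 : ∀ r ∈ Set.Ioc (0:ℝ) r₀, 0 ≤ w' r / r - (w' r) ^ 2 / 2)
    (h2 : ∀ r ∈ Set.Ioc (0:ℝ) r₀,
      0 ≤ (w'' r + w' r / r) - (1 - θ) * (w' r / r - (w' r) ^ 2 / 2))
    (hblow : Tendsto w (nhdsWithin 0 (Set.Ioi 0)) atBot) :
    ∃ C : ℝ, ∀ r ∈ Set.Ioc (0:ℝ) r₀, w r = 2 * Real.log r + C :=
  stmt11_general n k hk1 θ hθ r₀ w w' w'' hD1 hD2 h1 h2 hblow
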